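/- arXiv:2411.09246 — 2 statements merged into one kernel-verified Lean document; each statement's English description precedes it below -/
import Mathlib

section
/- Let G be a group and x ∈ G. Then x has finite order if and only if there exist two distinct finitely supported functions f, g : ℕ → ℕ such that the multisets ∑_i f(i) • {x^i} and ∑_i g(i) • {x^i} are equal. -/
theorem finite_order_iff_multiset_relation
    {G : Type*} [Group G] (x : G) :
    IsOfFinOrder x ↔ ∃ f g : ℕ →₀ ℕ, f ≠ g ∧
      (f.sum fun i n => n • ({x ^ i} : Multiset G)) =
      (g.sum fun i n => n • ({x ^ i} : Multiset G)) := by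
  constructor
  · intro h
    refine ⟨Finsupp.single 0 1, Finsupp.single (orderOf x) 1, ?_, ?_⟩
    · intro he
      have h0 : (Finsupp.single 0 1 : ℕ →₀ ℕ) 0 = Finsupp.single (orderOf x) 1 0 := by
        rw [he]
      have := (orderOf_pos_iff.mpr h).ne'
      simp [Finsupp.single_apply, this] at h0
    · simp [Finsupp.sum_single_index, pow_orderOf_eq_one]
  · rintro ⟨f, g, hfg, h⟩
    classical
    by_contra hx
    have hinj : Function.Injective (fun n : ℕ => x ^ n) :=
      injective_pow_iff_not_isOfFinOrder.mpr hx
    apply hfg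
    have key : ∀ (f : ℕ →₀ ℕ) (i : ℕ),
        Multiset.count (x ^ i) (f.sum fun j n => n • ({x ^ j} : Multiset G)) = f i := by
      intro f i
      rw [Finsupp.sum, Multiset.count_sum']
      rw [Finset.sum_eq_single i]
      · simp
      · intro j hj hji
        have : x ^ i ≠ x ^ j := fun e => hji (hinj e).symm
        simp [Multiset.count_singleton, this]
      · intro hi
        simp [Finsupp.notMem_support_iff.mp hi]
    ext i
    rw [← key f i, ← key g i, h]
end

section
/- Let R → S be a faithfully flat homomorphism of commutative rings and let A be an R-algebra. If A ⊗_R S is a faithfully flat S-algebra, then A is a faithfully flat R-algebra. -/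
open TensorProduct

section aux

/-- Faithfully flat modules reflect injectivity. -/
lemma injective_of_rTensor_injective {R : Type*} [CommRing R]
    {S : Type*} [CommRing S] [Algebra R S] [Module.FaithfullyFlat R S]
    {N N' : Type*} [AddCommGroup N] [Module R N] [AddCommGroup N'] [Module R N']
    (g : N →ₗ[R] N') (hg : Function.Injective (g.rTensor S)) :
    Function.Injective g := by
  have hex : Function.Exact ((0 : PUnit.{1} →ₗ[R] N).rTensor S) (g.rTensor S) := by
    rw [LinearMap.exact_iff, LinearMap.rTensor_zero, LinearMap.range_zero,
      LinearMap.ker_eq_bot]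
    exact hg
  have := Module.FaithfullyFlat.rTensor_reflects_exact R S (0 : PUnit.{1} →ₗ[R] N) g hex
  rw [LinearMap.exact_iff, LinearMap.range_zero] at this
  exact LinearMap.ker_eq_bot.1 this

variable {R S A : Type*} [CommRing R] [CommRing S] [CommRing A]
    [Algebra R S] [Algebra R A]

/-- The natural isomorphism `(N ⊗ A) ⊗ S ≃ N ⊗ (S ⊗ A)`. -/
noncomputable def tensorAssocComm (N : Type*) [AddCommGroup N] [Module R N] :
    (N ⊗[R] A) ⊗[R] S ≃ₗ[R] N ⊗[R] (S ⊗[R] A) :=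
  (TensorProduct.assoc R N A S) ≪≫ₗ
    TensorProduct.congr (LinearEquiv.refl R N) (TensorProduct.comm R A S)

lemma tensorAssocComm_naturality
    {N N' : Type*} [AddCommGroup N] [Module R N] [AddCommGroup N'] [Module R N']
    (f : N →ₗ[R] N') (x : (N ⊗[R] A) ⊗[R] S) :
    tensorAssocComm (S := S) (A := A) N' ((f.rTensor A).rTensor S x) =
      (f.rTensor (S ⊗[R] A)) (tensorAssocComm N x) := by
  induction x using TensorProduct.induction_on with
  | zero => simp
  | tmul y s =>
    induction y using TensorProduct.induction_on with
    | zero => simp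
    | tmul n a => rfl
    | add y z hy hz =>
      rw [add_tmul, map_add, map_add, hy, hz, ← map_add, ← map_add, ← add_tmul]
  | add x y hx hy => rw [map_add, map_add, hx, hy, ← map_add, ← map_add]

end aux

theorem faithfullyFlat_descends
    {R S A : Type*} [CommRing R] [CommRing S] [CommRing A]
    [Algebra R S] [Algebra R A] [Module.FaithfullyFlat R S]
    (h : Module.FaithfullyFlat S (S ⊗[R] A)) :
    Module.FaithfullyFlat R A := by
  have hff : Module.FaithfullyFlat R (S ⊗[R] A) :=
    Module.FaithfullyFlat.trans R S (S ⊗[R] A)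
  have flat : Module.Flat R A := by
    rw [Module.Flat.iff_rTensor_preserves_injective_linearMap]
    intro N N' _ _ _ _ f hf
    apply injective_of_rTensor_injective (S := S)
    have hinj : Function.Injective (f.rTensor (S ⊗[R] A)) :=
      Module.Flat.rTensor_preserves_injective_linearMap f hf
    intro x y hxy
    apply (tensorAssocComm (S := S) (A := A) N).injective
    apply hinj
    rw [← tensorAssocComm_naturality f x, ← tensorAssocComm_naturality f y, hxy]
  rw [Module.FaithfullyFlat.iff_flat_and_rTensor_faithful]
  refine ⟨flat, fun N _ _ _ => ?_⟩
  have h1 : Nontrivial (N ⊗[R] (S ⊗[R] A)) :=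
    Module.FaithfullyFlat.rTensor_nontrivial R (S ⊗[R] A) N
  by_contra hcon
  rw [not_nontrivial_iff_subsingleton] at hcon
  have h2 : Subsingleton ((N ⊗[R] A) ⊗[R] S) :=
    subsingleton_iff_forall_eq 0 |>.2 fun x => by
      induction x using TensorProduct.induction_on with
      | zero => rfl
      | tmul m s => rw [Subsingleton.elim m 0, zero_tmul]
      | add a b ha hb => rw [ha, hb, add_zero]
  have : Subsingleton (N ⊗[R] (S ⊗[R] A)) :=
    (tensorAssocComm (S := S) (A := A) N).toEquiv.symm.subsingleton
  exact not_subsingleton_iff_nontrivial.2 h1 this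
end
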